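/- Let B ⊆ P be a faithfully flat H-Hopf–Galois extension with translation map τ(h) = h⁽¹⁾ ⊗_B h⁽²⁾. If P is a *-algebra and H is a Hopf *-algebra such that the coaction δ_R: P → P ⊗ H is a *-map (unitary), then for all h ∈ H: (h*)⁽¹⁾ ⊗_B (h*)⁽²⁾ = (S⁻¹(h)⁽²⁾)* ⊗_B (S⁻¹(h)⁽¹⁾)*. -/

import Mathlib

/-!
Consider the twisted coaction `Φ(p ⊗ g) = p₍₀₎ ⊗ p₍₁₎ S(g)` on `P ⊗ H`. Coassociativity,
the antipode axiom and the counit give `Φ(p₍₀₎ ⊗ p₍₁₎) = p ⊗ 1`, so for a comodule algebra `Φ`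
turns the canonical map `q ⊗ p ↦ q p₍₀₎ ⊗ p₍₁₎` into `q ⊗ p ↦ q₍₀₎ p ⊗ q₍₁₎`. Since the
coaction is a `*`-map, the canonical map sends `p* ⊗ q*` to
`p* (q₍₀₎)* ⊗ (q₍₁₎)* = (q₍₀₎ p ⊗ q₍₁₎)*`, i.e. `can ∘ (star-flip) = * ∘ Φ ∘ can`.
A representative of `τ(S⁻¹ h)` is sent by `can` to `1 ⊗ S⁻¹ h`, hence its star-flip to
`(1 ⊗ S S⁻¹ h)* = 1 ⊗ h*`, and injectivity of the canonical map on `P ⊗_B P` identifies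
its class with `τ(h*)`.
-/

open TensorProduct

noncomputable section

variable (H : Type) [Ring H] [HopfAlgebra ℂ H] [StarRing H] [StarModule ℂ H]
variable (P : Type) [Ring P] [Algebra ℂ P] [StarRing P] [StarModule ℂ P]
variable (coact : P →ₗ[ℂ] P ⊗[ℂ] H)

/-- The (lift of the) canonical Galois map `q ⊗ p ↦ q p₍₀₎ ⊗ p₍₁₎`. -/
def galF : P ⊗[ℂ] P →ₗ[ℂ] P ⊗[ℂ] H :=
  (TensorProduct.map (LinearMap.mul' ℂ P) (LinearMap.id : H →ₗ[ℂ] H)) ∘ₗ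
  (TensorProduct.assoc ℂ P P H).symm.toLinearMap ∘ₗ
  (TensorProduct.map (LinearMap.id : P →ₗ[ℂ] P) coact)

/-- The submodule of relations defining `P ⊗_B P`, where `B = P^{coH}` is the coinvariant
subalgebra. -/
def coinvRel : Submodule ℂ (P ⊗[ℂ] P) :=
  Submodule.span ℂ
    {z | ∃ p q b : P, coact b = b ⊗ₜ[ℂ] (1 : H) ∧
      z = (p * b) ⊗ₜ[ℂ] q - p ⊗ₜ[ℂ] (b * q)}

theorem tensor_funext_of_additive {R M N Q : Type*} [CommSemiring R] [AddCommMonoid M]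
    [AddCommMonoid N] [Module R M] [Module R N] [AddCommMonoid Q] {f g : M ⊗[R] N → Q}
    (hf : ∀ u v, f (u + v) = f u + f v) (hg : ∀ u v, g (u + v) = g u + g v)
    (htmul : ∀ m n, f (m ⊗ₜ[R] n) = g (m ⊗ₜ[R] n)) : f = g := by
  funext x
  induction x using TensorProduct.induction_on with
  | zero => simpa using htmul 0 0
  | tmul m n => exact htmul m n
  | add u v hu hv => rw [hf, hg, hu, hv]

structure IsComodule {R H M : Type*} [CommSemiring R] [AddCommMonoid H] [Module R H]
    [Coalgebra R H] [AddCommMonoid M] [Module R M] (coact : M →ₗ[R] M ⊗[R] H) : Prop where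
  coassoc : ∀ m : M,
    TensorProduct.assoc R M H H (TensorProduct.map coact LinearMap.id (coact m)) =
      TensorProduct.map LinearMap.id (Coalgebra.comul (R := R)) (coact m)
  counit : ∀ m : M,
    TensorProduct.rid R M (TensorProduct.map LinearMap.id (Coalgebra.counit (R := R)) (coact m)) =
      m

section TwistedCoaction

variable {R H P : Type*} [CommSemiring R] [Semiring H] [HopfAlgebra R H] [Semiring P]
  [Algebra R P] (coact : P →ₗ[R] P ⊗[R] H)

def twistedCoaction : P ⊗[R] H →ₗ[R] P ⊗[R] H :=
  LinearMap.mul' R (P ⊗[R] H) ∘ₗ TensorProduct.map coact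
    (Algebra.TensorProduct.includeRight.toLinearMap ∘ₗ HopfAlgebra.antipode R)

@[simp]
theorem twistedCoaction_tmul (p : P) (g : H) :
    twistedCoaction coact (p ⊗ₜ g) = coact p * (1 ⊗ₜ HopfAlgebra.antipode R g) := by
  simp [twistedCoaction]

theorem twistedCoaction_one_tmul (hone : coact 1 = 1) (g : H) :
    twistedCoaction coact (1 ⊗ₜ g) = 1 ⊗ₜ HopfAlgebra.antipode R g := by
  simp [hone]

theorem twistedCoaction_mul_left (hmul : ∀ p q, coact (p * q) = coact p * coact q) (q : P)
    (v : P ⊗[R] H) :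
    twistedCoaction coact ((q ⊗ₜ 1) * v) = coact q * twistedCoaction coact v := by
  induction v using TensorProduct.induction_on with
  | zero => simp
  | tmul a g => simp [hmul, mul_assoc]
  | add v w hv hw => simp [mul_add, hv, hw]

theorem twistedCoaction_coact (hcomod : IsComodule coact) (p : P) :
    twistedCoaction coact (coact p) = p ⊗ₜ 1 := by
  set mulS : H ⊗[R] H →ₗ[R] H := LinearMap.mul' R H ∘ₗ (HopfAlgebra.antipode R).lTensor H
  have expand : ∀ v, twistedCoaction coact v =
      mulS.lTensor P (TensorProduct.assoc R P H H (TensorProduct.map coact LinearMap.id v)) := by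
    intro v
    induction v using TensorProduct.induction_on with
    | zero => simp
    | add v w hv hw => simp only [map_add, hv, hw]
    | tmul a g =>
      simp only [twistedCoaction_tmul, TensorProduct.map_tmul, LinearMap.id_coe, id_eq]
      induction coact a using TensorProduct.induction_on with
      | zero => simp
      | tmul x b => simp [mulS]
      | add u w hu hw => simp only [add_mul, TensorProduct.add_tmul, map_add, hu, hw]
  have counit_tmul : TensorProduct.map LinearMap.id (Coalgebra.counit (R := R)) (coact p) =
      p ⊗ₜ 1 := by
    rw [← (TensorProduct.rid R P).symm_apply_apply (TensorProduct.map _ _ (coact p)),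
      hcomod.counit]
    rfl
  rw [expand, hcomod.coassoc, LinearMap.lTensor, ← LinearMap.comp_apply, ← TensorProduct.map_comp,
    LinearMap.comp_assoc, HopfAlgebra.mul_antipode_lTensor_comul, TensorProduct.map_comp,
    LinearMap.comp_apply, counit_tmul]
  simp

end TwistedCoaction

section GaloisMap

variable {H P : Type} [Ring H] [HopfAlgebra ℂ H] [Ring P] [Algebra ℂ P]
  {coact : P →ₗ[ℂ] P ⊗[ℂ] H}

theorem galF_tmul (q p : P) : galF H P coact (q ⊗ₜ p) = (q ⊗ₜ 1) * coact p := by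
  simp only [galF, LinearMap.coe_comp, Function.comp_apply, TensorProduct.map_tmul,
    LinearMap.id_coe, id_eq, LinearEquiv.coe_coe]
  induction coact p using TensorProduct.induction_on with
  | zero => simp
  | tmul a g => simp
  | add u v hu hv => simp only [TensorProduct.tmul_add, map_add, mul_add, hu, hv]

theorem twistedCoaction_galF_tmul (hcomod : IsComodule coact)
    (hmul : ∀ p q, coact (p * q) = coact p * coact q) (q p : P) :
    twistedCoaction coact (galF H P coact (q ⊗ₜ p)) = coact q * (p ⊗ₜ 1) := by
  rw [galF_tmul, twistedCoaction_mul_left coact hmul, twistedCoaction_coact coact hcomod]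

variable [StarRing H] [StarModule ℂ H] [StarRing P] [StarModule ℂ P]

theorem galF_comm_star (hcomod : IsComodule coact)
    (hmul : ∀ p q, coact (p * q) = coact p * coact q)
    (hstar : ∀ p, coact (star p) = star (coact p)) (x : P ⊗[ℂ] P) :
    galF H P coact (TensorProduct.comm ℂ P P (star x)) =
      star (twistedCoaction coact (galF H P coact x)) := by
  induction x using TensorProduct.induction_on with
  | zero => simp
  | tmul q p =>
    rw [twistedCoaction_galF_tmul hcomod hmul, star_mul, ← hstar]
    simp [galF_tmul]
  | add x y hx hy => simp only [star_add, map_add, hx, hy]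

end GaloisMap

theorem translation_map_star
    (Sinv : H →ₗ[ℂ] H)
    (hSinv₂ : ∀ h : H, HopfAlgebra.antipode (R := ℂ) (Sinv h) = h)
    -- P is a right H-comodule algebra
    (hcoassoc : ∀ p : P,
      (TensorProduct.assoc ℂ P H H)
          ((TensorProduct.map coact (LinearMap.id : H →ₗ[ℂ] H)) (coact p)) =
        (TensorProduct.map (LinearMap.id : P →ₗ[ℂ] P) (Coalgebra.comul (R := ℂ))) (coact p))
    (hcounit : ∀ p : P,
      (TensorProduct.rid ℂ P)
        ((TensorProduct.map (LinearMap.id : P →ₗ[ℂ] P) (Coalgebra.counit (R := ℂ)))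
          (coact p)) = p)
    (hcoact_alg : ∀ p q : P, coact (p * q) = coact p * coact q)
    (hcoact_one : coact 1 = 1)
    -- the coaction is unitary (a `*`-map)
    (sPH : P ⊗[ℂ] H → P ⊗[ℂ] H)
    (hsPH_add : ∀ u v : P ⊗[ℂ] H, sPH (u + v) = sPH u + sPH v)
    (hsPH_tmul : ∀ (p : P) (h : H), sPH (p ⊗ₜ[ℂ] h) = star p ⊗ₜ[ℂ] star h)
    (hcoact_star : ∀ p : P, coact (star p) = sPH (coact p))
    -- the star-flip map `p ⊗ q ↦ q* ⊗ p*` on `P ⊗ P`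
    (sflip : P ⊗[ℂ] P → P ⊗[ℂ] P)
    (hsflip_add : ∀ u v : P ⊗[ℂ] P, sflip (u + v) = sflip u + sflip v)
    (hsflip_tmul : ∀ p q : P, sflip (p ⊗ₜ[ℂ] q) = star q ⊗ₜ[ℂ] star p)
    -- the Hopf–Galois condition: the canonical map is bijective
    (χ : ((P ⊗[ℂ] P) ⧸ coinvRel H P coact) →ₗ[ℂ] P ⊗[ℂ] H)
    (hχ : ∀ x : P ⊗[ℂ] P, χ ((coinvRel H P coact).mkQ x) = galF H P coact x)
    (hbij : Function.Bijective χ)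
    -- the translation map
    (τ : H →ₗ[ℂ] ((P ⊗[ℂ] P) ⧸ coinvRel H P coact))
    (hτ : ∀ h : H, χ (τ h) = (1 : P) ⊗ₜ[ℂ] h) :
    ∀ (h : H) (rep : P ⊗[ℂ] P),
      (coinvRel H P coact).mkQ rep = τ (Sinv h) →
        (coinvRel H P coact).mkQ (sflip rep) = τ (star h) := by
  intro h rep hrep
  have hcomod : IsComodule coact := ⟨hcoassoc, hcounit⟩
  have hsPH : sPH = star :=
    tensor_funext_of_additive hsPH_add star_add (by simp [hsPH_tmul])
  have hsflip : sflip = fun x => TensorProduct.comm ℂ P P (star x) :=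
    tensor_funext_of_additive hsflip_add (by simp) (by simp [hsflip_tmul])
  have hgal_rep : galF H P coact rep = 1 ⊗ₜ Sinv h := by rw [← hχ, hrep, hτ]
  apply hbij.injective
  rw [hχ, hτ, hsflip, galF_comm_star hcomod hcoact_alg (hsPH ▸ hcoact_star), hgal_rep,
    twistedCoaction_one_tmul coact hcoact_one, hSinv₂]
  simp
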